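/- Let R be a p × m random matrix with i.i.d. entries of mean zero and second moment μ₂, and let c_k denote the k-th column of R Rᵀ. Then for k ≠ l, E[c_k c_lᵀ] = m² μ₂² e_k e_lᵀ + m μ₂² e_l e_kᵀ. -/

import Mathlib

/-!
Expanding `(R Rᵀ)ᵢₖ (R Rᵀ)ⱼₗ = ∑ a b, Rᵢₐ Rₖₐ Rⱼᵦ Rₗᵦ`, each summand is a mixed fourth moment of
independent centred entries. Such a moment vanishes as soon as some entry occurs exactly once, and
equals `μ₂²` when the four factors pair off into two distinct entries. For `k ≠ l` the pairing
`(i,a) = (k,a)`, `(j,b) = (l,b)` survives for all `m²` choices of `(a, b)`, the pairing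
`(i,a) = (l,b)`, `(k,a) = (j,b)` only for the `m` choices with `a = b`, and the third one never.
-/

open MeasureTheory ProbabilityTheory Matrix

instance ENNReal.holderTriple_four_four_two : ENNReal.HolderTriple 4 4 2 where
  inv_add_inv_eq_inv := by
    rw [← two_mul, show (4 : ENNReal) = 2 * 2 by norm_num, ENNReal.mul_inv (by simp) (by simp),
      ← mul_assoc, ENNReal.mul_inv_cancel (by simp) (by simp), one_mul]

section

variable {Ω ι : Type*} {_ : MeasurableSpace Ω} {μ : Measure Ω} {X : ι → Ω → ℝ}

lemma MeasureTheory.MemLp.integrable_mul_mul_mul {f g h k : Ω → ℝ} (hf : MemLp f 4 μ)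
    (hg : MemLp g 4 μ) (hh : MemLp h 4 μ) (hk : MemLp k 4 μ) :
    Integrable (fun ω => f ω * g ω * h ω * k ω) μ := by
  simpa only [Pi.mul_def, mul_assoc] using (hg.mul (r := 2) hf).integrable_mul (hk.mul (r := 2) hh)

namespace ProbabilityTheory.iIndepFun

variable (hind : iIndepFun X μ) (hX : ∀ i, Measurable (X i))
include hind hX

lemma integral_mul_mul_mul_eq_zero {p q r s : ι} (hq : p ≠ q) (hr : p ≠ r) (hs : p ≠ s)
    (hp : ∫ ω, X p ω ∂μ = 0) :
    ∫ ω, X p ω * X q ω * X r ω * X s ω ∂μ = 0 := by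
  classical
  have hpqrs : IndepFun (X p) (fun ω => X q ω * X r ω * X s ω) μ := by
    have := (hind.indepFun_finset {p} {q, r, s} (by simp [hq, hr, hs]) hX).comp
      (φ := fun v : ({p} : Finset ι) → ℝ => v ⟨p, by simp⟩)
      (ψ := fun v : ({q, r, s} : Finset ι) → ℝ => v ⟨q, by simp⟩ * v ⟨r, by simp⟩ * v ⟨s, by simp⟩)
      (_mγ := Real.measurableSpace) (_mγ' := Real.measurableSpace) (by fun_prop) (by fun_prop)
    exact this
  have := hpqrs.integral_fun_mul_eq_mul_integral (hX p).aestronglyMeasurable (by fun_prop)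
  simp only [mul_assoc] at this ⊢
  rw [this, hp, zero_mul]

lemma integral_sq_mul_sq {p r : ι} (hpr : p ≠ r) :
    ∫ ω, X p ω * X p ω * X r ω * X r ω ∂μ = (∫ ω, X p ω ^ 2 ∂μ) * ∫ ω, X r ω ^ 2 ∂μ := by
  have hsq : IndepFun (fun ω => X p ω ^ 2) (fun ω => X r ω ^ 2) μ :=
    (hind.indepFun hpr).comp (measurable_id.pow_const 2) (measurable_id.pow_const 2)
  calc ∫ ω, X p ω * X p ω * X r ω * X r ω ∂μ = ∫ ω, X p ω ^ 2 * X r ω ^ 2 ∂μ := by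
        congr 1; ext ω; ring
    _ = _ := hsq.integral_fun_mul_eq_mul_integral (by fun_prop) (by fun_prop)

lemma integral_mul_mul_mul [DecidableEq ι] (hmean : ∀ i, ∫ ω, X i ω ∂μ = 0) {σ2 : ℝ}
    (hvar : ∀ i, ∫ ω, X i ω ^ 2 ∂μ = σ2) {p q r s : ι} (hpqrs : ¬(p = q ∧ p = r ∧ p = s)) :
    ∫ ω, X p ω * X q ω * X r ω * X s ω ∂μ =
      σ2 ^ 2 * ((if p = q ∧ r = s then 1 else 0) + (if p = r ∧ q = s then 1 else 0)
        + (if p = s ∧ q = r then 1 else 0)) := by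
  have lone {a b c d : ι} (hb : a ≠ b) (hc : a ≠ c) (hd : a ≠ d) :
      ∫ ω, X a ω * X b ω * X c ω * X d ω ∂μ = 0 :=
    integral_mul_mul_mul_eq_zero hind hX hb hc hd (hmean a)
  have pair {a b : ι} (hab : a ≠ b) : ∫ ω, X a ω * X a ω * X b ω * X b ω ∂μ = σ2 ^ 2 := by
    rw [integral_sq_mul_sq hind hX hab, hvar, hvar, sq]
  by_cases hpq : p = q
  · subst hpq
    by_cases hrs : r = s
    · subst hrs
      have hpr : p ≠ r := fun h => hpqrs ⟨rfl, h, h⟩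
      simp [pair hpr, hpr]
    by_cases hpr : p = r
    · subst hpr
      calc _ = ∫ ω, X s ω * X p ω * X p ω * X p ω ∂μ := by congr 1; ext; ring
        _ = _ := by simp [lone (Ne.symm hrs) (Ne.symm hrs) (Ne.symm hrs), hrs]
    calc _ = ∫ ω, X r ω * X p ω * X p ω * X s ω ∂μ := by congr 1; ext; ring
      _ = _ := by simp [lone (Ne.symm hpr) (Ne.symm hpr) hrs, hpr, hrs]
  by_cases hpr : p = r
  · subst hpr
    by_cases hqs : q = s
    · subst hqs
      calc _ = ∫ ω, X p ω * X p ω * X q ω * X q ω ∂μ := by congr 1; ext; ring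
        _ = _ := by simp [pair hpq, hpq]
    calc _ = ∫ ω, X q ω * X p ω * X p ω * X s ω ∂μ := by congr 1; ext; ring
      _ = _ := by simp [lone (Ne.symm hpq) (Ne.symm hpq) hqs, hpq, hqs, Ne.symm hpq]
  by_cases hps : p = s
  · subst hps
    by_cases hqr : q = r
    · subst hqr
      calc _ = ∫ ω, X p ω * X p ω * X q ω * X q ω ∂μ := by congr 1; ext; ring
        _ = _ := by simp [pair hpq, hpq]
    calc _ = ∫ ω, X q ω * X p ω * X r ω * X p ω ∂μ := by congr 1; ext; ring
      _ = _ := by simp [lone (Ne.symm hpq) hqr (Ne.symm hpq), hpq, hpr, hqr]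
  simp [lone hpq hpr hps, hpq, hpr, hps]

end ProbabilityTheory.iIndepFun
end

lemma integral_mul_transpose_self_apply_mul_apply {Ω n κ : Type*} {_ : MeasurableSpace Ω}
    {μ : Measure Ω} [Fintype κ] [DecidableEq n] (R : Ω → Matrix n κ ℝ)
    (hmeas : ∀ i a, Measurable (fun ω => R ω i a))
    (hindep : iIndepFun (fun (q : n × κ) ω => R ω q.1 q.2) μ)
    (hL4 : ∀ i a, MemLp (fun ω => R ω i a) 4 μ) {σ2 : ℝ}
    (hmean : ∀ i a, ∫ ω, R ω i a ∂μ = 0) (hvar : ∀ i a, ∫ ω, R ω i a ^ 2 ∂μ = σ2)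
    {i j k l : n} (hijkl : ¬(i = k ∧ i = j ∧ i = l)) :
    ∫ ω, (R ω * (R ω)ᵀ) i k * (R ω * (R ω)ᵀ) j l ∂μ =
      σ2 ^ 2 * ((Fintype.card κ : ℝ) ^ 2 * (if i = k ∧ j = l then 1 else 0)
        + Fintype.card κ * (if i = j ∧ k = l then 1 else 0)
        + Fintype.card κ * (if i = l ∧ k = j then 1 else 0)) := by
  classical
  have hentry (a b : κ) := hindep.integral_mul_mul_mul (fun q => hmeas q.1 q.2)
    (fun q => hmean q.1 q.2) (fun q => hvar q.1 q.2) (p := (i, a)) (q := (k, a)) (r := (j, b))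
    (s := (l, b)) (by simp only [Prod.mk.injEq]; tauto)
  have hint (a b : κ) : Integrable (fun ω => R ω i a * R ω k a * R ω j b * R ω l b) μ :=
    (hL4 i a).integrable_mul_mul_mul (hL4 k a) (hL4 j b) (hL4 l b)
  simp only [Matrix.mul_apply, Matrix.transpose_apply, Finset.sum_mul_sum, ← mul_assoc]
  rw [integral_finsetSum _ fun a _ => integrable_finsetSum _ fun b _ => hint a b]
  simp only [integral_finsetSum _ fun b _ => hint _ b, hentry]
  simp only [← Finset.mul_sum, Finset.sum_add_distrib, Prod.mk.injEq, and_true, ite_and]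
  simp [Finset.sum_ite_eq, sq]

theorem expectation_column_outer_distinct_general
    {Ω : Type*} [MeasureSpace Ω]
    {p m : ℕ} (R : Ω → Matrix (Fin p) (Fin m) ℝ)
    (hmeas : ∀ i j, Measurable (fun ω => R ω i j))
    (hindep : iIndepFun
      (fun (q : Fin p × Fin m) ω => R ω q.1 q.2) ℙ)
    (hL4 : ∀ i j, MemLp (fun ω => R ω i j) 4 ℙ)
    (μ2 : ℝ)
    (hmean : ∀ i j, ∫ ω, R ω i j ∂ℙ = 0)
    (h2 : ∀ i j, ∫ ω, (R ω i j) ^ 2 ∂ℙ = μ2)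
    (k l : Fin p) (hkl : k ≠ l) :
    (Matrix.of fun i j => ∫ ω, (R ω * (R ω)ᵀ) i k * (R ω * (R ω)ᵀ) j l ∂ℙ)
      = ((m : ℝ) ^ 2 * μ2 ^ 2) • Matrix.single k l (1 : ℝ)
        + ((m : ℝ) * μ2 ^ 2) • Matrix.single l k (1 : ℝ) := by
  ext i j
  rw [Matrix.of_apply, integral_mul_transpose_self_apply_mul_apply R hmeas hindep hL4 hmean h2
    fun h => hkl (h.1.symm.trans h.2.2)]
  simp only [Fintype.card_fin, hkl, and_false, if_false, mul_zero, add_zero, Matrix.add_apply,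
    Matrix.smul_apply, Matrix.single_apply, smul_eq_mul, @eq_comm _ k i, @eq_comm _ l j,
    @eq_comm _ l i]
  ring

/-- For a `p × m` random matrix `R` with i.i.d. mean-zero entries with
second moment `μ2` and finite fourth moment, and `c_k` the `k`-th column of `R Rᵀ`,
for `k ≠ l` we have `E[c_k c_lᵀ] = m² μ2² e_k e_lᵀ + m μ2² e_l e_kᵀ`. -/
theorem expectation_column_outer_distinct
    {Ω : Type*} [MeasureSpace Ω] [IsProbabilityMeasure (ℙ : Measure Ω)]
    {p m : ℕ} (R : Ω → Matrix (Fin p) (Fin m) ℝ)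
    (hmeas : ∀ i j, Measurable (fun ω => R ω i j))
    (hindep : iIndepFun
      (fun (q : Fin p × Fin m) ω => R ω q.1 q.2) ℙ)
    (hid : ∀ i j i' j', IdentDistrib (fun ω => R ω i j) (fun ω => R ω i' j') ℙ ℙ)
    (hL4 : ∀ i j, MemLp (fun ω => R ω i j) 4 ℙ)
    (μ2 : ℝ)
    (hmean : ∀ i j, ∫ ω, R ω i j ∂ℙ = 0)
    (h2 : ∀ i j, ∫ ω, (R ω i j) ^ 2 ∂ℙ = μ2)
    (k l : Fin p) (hkl : k ≠ l) :
    (Matrix.of fun i j => ∫ ω, (R ω * (R ω)ᵀ) i k * (R ω * (R ω)ᵀ) j l ∂ℙ)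
      = ((m : ℝ) ^ 2 * μ2 ^ 2) • Matrix.single k l (1 : ℝ)
        + ((m : ℝ) * μ2 ^ 2) • Matrix.single l k (1 : ℝ) :=
  expectation_column_outer_distinct_general R hmeas hindep hL4 μ2 hmean h2 k l hkl
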